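/- Suppose q1, q2 > 0 satisfy Q := 1/q1 + 1/q2 < 1 and Q_{edge,2} := 1/q1 + 3/(2q2) > 1. Then ∫₀^∞ ( ∫₀^∞ ∫₀^1 ρ(t,s+v) ds dt )² dv < ∞, where ρ(t,s) = (|t|^{q1} + |s|^{q2})^{-1}. -/

import Mathlib

open MeasureTheory Real Set

noncomputable def rho (q1 q2 t s : ℝ) : ℝ := (|t| ^ q1 + |s| ^ q2)⁻¹

/-!
Write `F v` for the double integral. Bounding `ρ(t, s + v)` by `t^(-q1)`, `v^(-q2)` and `s^(-q2)`,
every estimate reduces to `∫₀^∞ min (c^(-p)) (u^(-p)) du = p/(p-1) · c^(1-p)` for a suitable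
crossing point `c`. Integrating first in `s`, the inner integral is at most `min (v^(-q2)) (t^(-q1))`
and, up to a constant, `min (v^(1-q2)) (t^(-β))` with `β = q1 - q1/q2 > 1`; integrating these in `t`
(crossing point `v^(q2/q1)`, the anisotropic scaling of `ρ`) gives `F v ≲ v^(-α)` and
`F v ≲ v^(1-α)` with `α = q2 - q2/q1`. So `F²` is integrable at infinity since `α > 1` (that is
`Q < 1`) and near `0` since `α < 3/2` (that is `Q_{edge,2} > 1`).
-/

section MinRpow

variable {p c : ℝ}

lemma min_rpow_eqOn_Ioc (hp : 0 ≤ p) :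
    EqOn (fun u : ℝ => min (c ^ (-p)) (u ^ (-p))) (fun _ => c ^ (-p)) (Ioc 0 c) :=
  fun _ hu => min_eq_left (rpow_le_rpow_of_nonpos hu.1 hu.2 (neg_nonpos.2 hp))

lemma min_rpow_eqOn_Ioi (hp : 0 ≤ p) (hc : 0 < c) :
    EqOn (fun u : ℝ => min (c ^ (-p)) (u ^ (-p))) (fun u => u ^ (-p)) (Ioi c) :=
  fun _ hu => min_eq_right (rpow_le_rpow_of_nonpos hc (le_of_lt hu) (neg_nonpos.2 hp))

lemma integrableOn_Ioi_min_rpow (hp : 1 < p) (hc : 0 < c) :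
    IntegrableOn (fun u : ℝ => min (c ^ (-p)) (u ^ (-p))) (Ioi 0) := by
  rw [← Ioc_union_Ioi_eq_Ioi hc.le]
  refine IntegrableOn.union ?_ ?_
  · exact (integrableOn_const measure_Ioc_lt_top.ne).congr_fun
      (min_rpow_eqOn_Ioc (by linarith)).symm measurableSet_Ioc
  · exact (integrableOn_Ioi_rpow_of_lt (by linarith) hc).congr_fun
      (min_rpow_eqOn_Ioi (by linarith) hc).symm measurableSet_Ioi

lemma integral_Ioi_min_rpow (hp : 1 < p) (hc : 0 < c) :
    ∫ u in Ioi 0, min (c ^ (-p)) (u ^ (-p)) = p / (p - 1) * c ^ (1 - p) := by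
  have hp0 : (0 : ℝ) ≤ p := by linarith
  rw [← Ioc_union_Ioi_eq_Ioi hc.le, setIntegral_union (Ioc_disjoint_Ioi le_rfl) measurableSet_Ioi
      ((integrableOn_Ioi_min_rpow hp hc).mono_set Ioc_subset_Ioi_self)
      ((integrableOn_Ioi_min_rpow hp hc).mono_set (Ioi_subset_Ioi hc.le)),
    setIntegral_congr_fun measurableSet_Ioc (min_rpow_eqOn_Ioc hp0),
    setIntegral_congr_fun measurableSet_Ioi (min_rpow_eqOn_Ioi hp0 hc),
    setIntegral_const, integral_Ioi_rpow_of_lt (by linarith) hc, measureReal_def, volume_Ioc,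
    sub_zero, ENNReal.toReal_ofReal hc.le, smul_eq_mul]
  have hc_mul : c * c ^ (-p) = c ^ (1 - p) := by
    rw [sub_eq_add_neg, rpow_add hc, rpow_one]
  rw [hc_mul, show -p + 1 = 1 - p by ring]
  have hp1 : p - 1 ≠ 0 := by linarith
  have hp1' : 1 - p ≠ 0 := by linarith
  field_simp
  ring

lemma setIntegral_le_of_le_mul_min_rpow {s : Set ℝ} {f : ℝ → ℝ} {C : ℝ} (hs : MeasurableSet s)
    (hs0 : s ⊆ Ioi 0) (hC : 0 ≤ C) (hp : 1 < p) (hc : 0 < c) (hf0 : ∀ u ∈ s, 0 ≤ f u)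
    (hf : ∀ u ∈ s, f u ≤ C * min (c ^ (-p)) (u ^ (-p))) :
    ∫ u in s, f u ≤ C * (p / (p - 1) * c ^ (1 - p)) := by
  have hint : IntegrableOn (fun u => C * min (c ^ (-p)) (u ^ (-p))) (Ioi 0) :=
    (integrableOn_Ioi_min_rpow hp hc).const_mul C
  calc ∫ u in s, f u ≤ ∫ u in s, C * min (c ^ (-p)) (u ^ (-p)) :=
        integral_mono_of_nonneg ((ae_restrict_iff' hs).2 (ae_of_all _ hf0)) (hint.mono_set hs0)
          ((ae_restrict_iff' hs).2 (ae_of_all _ hf))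
    _ ≤ ∫ u in Ioi 0, C * min (c ^ (-p)) (u ^ (-p)) := by
        refine setIntegral_mono_set hint ?_ hs0.eventuallyLE
        refine (ae_restrict_iff' measurableSet_Ioi).2 (ae_of_all _ fun u hu => ?_)
        exact mul_nonneg hC (le_min (rpow_nonneg hc.le _) (rpow_nonneg (le_of_lt hu) _))
    _ = C * (p / (p - 1) * c ^ (1 - p)) := by
        rw [integral_const_mul, integral_Ioi_min_rpow hp hc]

end MinRpow

lemma setLIntegral_ofReal_sq_lt_top_of_le_rpow {s : Set ℝ} {F : ℝ → ℝ} {K e : ℝ}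
    (hs : MeasurableSet s) (hs0 : s ⊆ Ioi 0) (hint : IntegrableOn (fun v => v ^ (2 * e)) s)
    (hF0 : ∀ v ∈ s, 0 ≤ F v) (hF : ∀ v ∈ s, F v ≤ K * v ^ e) :
    ∫⁻ v in s, ENNReal.ofReal (F v ^ 2) < ⊤ := by
  refine lt_of_le_of_lt (setLIntegral_mono' hs fun v hv => ENNReal.ofReal_le_ofReal ?_)
    (hint.const_mul (K ^ 2)).lintegral_lt_top
  calc F v ^ 2 ≤ (K * v ^ e) ^ 2 := pow_le_pow_left₀ (hF0 v hv) (hF v hv) 2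
    _ = K ^ 2 * v ^ (2 * e) := by
      rw [mul_pow, mul_comm 2 e, rpow_mul (le_of_lt (hs0 hv)), rpow_two]

lemma lintegral_Ioi_ofReal_sq_lt_top_of_le_rpow {F : ℝ → ℝ} {K₀ K₁ e₀ e₁ : ℝ}
    (he₀ : -1 / 2 < e₀) (he₁ : e₁ < -1 / 2) (hF0 : ∀ v ∈ Ioi 0, 0 ≤ F v)
    (hF₀ : ∀ v ∈ Ioc 0 1, F v ≤ K₀ * v ^ e₀) (hF₁ : ∀ v ∈ Ioi 1, F v ≤ K₁ * v ^ e₁) :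
    ∫⁻ v in Ioi 0, ENNReal.ofReal (F v ^ 2) < ⊤ := by
  rw [← Ioc_union_Ioi_eq_Ioi zero_le_one]
  refine lt_of_le_of_lt (lintegral_union_le _ _ _) (ENNReal.add_lt_top.2 ⟨?_, ?_⟩)
  · exact setLIntegral_ofReal_sq_lt_top_of_le_rpow measurableSet_Ioc Ioc_subset_Ioi_self
      (intervalIntegral.intervalIntegrable_rpow' (by linarith)).1
      (fun v hv => hF0 v hv.1) hF₀
  · exact setLIntegral_ofReal_sq_lt_top_of_le_rpow measurableSet_Ioi (Ioi_subset_Ioi zero_le_one)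
      (integrableOn_Ioi_rpow_of_lt (by linarith) one_pos)
      (fun v hv => hF0 v (mem_Ioi.2 (one_pos.trans hv))) hF₁

section Rho

variable {q1 q2 t s u v : ℝ}

lemma rho_nonneg (q1 q2 t s : ℝ) : 0 ≤ rho q1 q2 t s := by
  unfold rho; positivity

lemma rho_le_rpow_left (ht : 0 < t) : rho q1 q2 t s ≤ t ^ (-q1) := by
  rw [rho, rpow_neg ht.le, abs_of_pos ht]
  exact inv_anti₀ (rpow_pos_of_pos ht _) (le_add_of_nonneg_right (rpow_nonneg (abs_nonneg s) _))

lemma rho_le_rpow_of_le (hq2 : 0 ≤ q2) (hu : 0 < u) (hus : u ≤ s) :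
    rho q1 q2 t s ≤ u ^ (-q2) := by
  rw [rho, rpow_neg hu.le, abs_of_pos (hu.trans_le hus)]
  exact inv_anti₀ (rpow_pos_of_pos hu _) ((rpow_le_rpow hu.le hus hq2).trans
    (le_add_of_nonneg_left (rpow_nonneg (abs_nonneg t) _)))

lemma setIntegral_rho_add_le_min (hq2 : 0 ≤ q2) (ht : 0 < t) (hv : 0 < v) :
    ∫ s in Ioc 0 1, rho q1 q2 t (s + v) ≤ min (v ^ (-q2)) (t ^ (-q1)) := by
  have hbound : ∀ s ∈ Ioc (0 : ℝ) 1, ‖rho q1 q2 t (s + v)‖ ≤ min (v ^ (-q2)) (t ^ (-q1)) :=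
    fun s hs => by
      rw [norm_of_nonneg (rho_nonneg ..)]
      exact le_min (rho_le_rpow_of_le hq2 hv (by linarith [hs.1])) (rho_le_rpow_left ht)
  simpa using (le_abs_self _).trans
    (norm_setIntegral_le_of_norm_le_const (measure_Ioc_lt_top (μ := volume)) hbound)

lemma setIntegral_rho_add_le_rpow_shift (hq2 : 1 < q2) (hv : 0 < v) (t : ℝ) :
    ∫ s in Ioc 0 1, rho q1 q2 t (s + v) ≤ q2 / (q2 - 1) * v ^ (1 - q2) := by
  simpa using setIntegral_le_of_le_mul_min_rpow (C := 1) measurableSet_Ioc Ioc_subset_Ioi_self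
    zero_le_one hq2 hv (fun s _ => rho_nonneg ..) fun s hs => by
      rw [one_mul]
      exact le_min (rho_le_rpow_of_le (by linarith) hv (by linarith [hs.1]))
        (rho_le_rpow_of_le (by linarith) hs.1 (by linarith))

lemma setIntegral_rho_add_le_rpow_left (hq2 : 1 < q2) (ht : 0 < t) (hv : 0 ≤ v) :
    ∫ s in Ioc 0 1, rho q1 q2 t (s + v) ≤ q2 / (q2 - 1) * t ^ (q1 / q2 - q1) := by
  have hc : 0 < t ^ (q1 / q2) := rpow_pos_of_pos ht _
  have hcross : (t ^ (q1 / q2)) ^ (-q2) = t ^ (-q1) := by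
    rw [← rpow_mul ht.le]; congr 1; field_simp
  have hscale : (t ^ (q1 / q2)) ^ (1 - q2) = t ^ (q1 / q2 - q1) := by
    rw [← rpow_mul ht.le]; congr 1; field_simp
  have := setIntegral_le_of_le_mul_min_rpow (s := Ioc 0 1) (f := fun s => rho q1 q2 t (s + v))
    (C := 1) measurableSet_Ioc Ioc_subset_Ioi_self zero_le_one hq2 hc (fun s _ => rho_nonneg ..)
    fun s hs => by
      rw [one_mul, hcross]
      exact le_min (rho_le_rpow_left ht) (rho_le_rpow_of_le (by linarith) hs.1 (by linarith))
  rwa [one_mul, hscale] at this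

lemma integral_integral_rho_add_le_rpow_decay (hq1 : 1 < q1) (hq2 : 0 ≤ q2) (hv : 0 < v) :
    ∫ t in Ioi 0, ∫ s in Ioc 0 1, rho q1 q2 t (s + v) ≤ q1 / (q1 - 1) * v ^ (q2 / q1 - q2) := by
  have hc : 0 < v ^ (q2 / q1) := rpow_pos_of_pos hv _
  have hcross : (v ^ (q2 / q1)) ^ (-q1) = v ^ (-q2) := by
    rw [← rpow_mul hv.le]; congr 1; field_simp
  have hscale : (v ^ (q2 / q1)) ^ (1 - q1) = v ^ (q2 / q1 - q2) := by
    rw [← rpow_mul hv.le]; congr 1; field_simp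
  have := setIntegral_le_of_le_mul_min_rpow (C := 1) measurableSet_Ioi subset_rfl zero_le_one hq1
    hc (fun t _ => integral_nonneg fun s => rho_nonneg ..) fun t ht => by
      rw [one_mul, hcross]
      exact setIntegral_rho_add_le_min hq2 ht hv
  rwa [one_mul, hscale] at this

lemma integral_integral_rho_add_le_rpow_singular (hq1 : 0 < q1) (hq2 : 0 < q2)
    (hQ : 1 / q1 + 1 / q2 < 1) (hv : 0 < v) :
    ∫ t in Ioi 0, ∫ s in Ioc 0 1, rho q1 q2 t (s + v) ≤
      q2 / (q2 - 1) * ((q1 - q1 / q2) / (q1 - q1 / q2 - 1)) * v ^ (1 + q2 / q1 - q2) := by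
  have hq2' : 1 < q2 := (div_lt_one hq2).1 (by linarith [one_div_pos.2 hq1])
  have hβ : 1 < q1 - q1 / q2 := by
    have := mul_lt_mul_of_pos_left (show 1 / q1 < 1 - 1 / q2 by linarith) hq1
    rwa [mul_one_div_cancel hq1.ne', mul_sub, mul_one, mul_one_div] at this
  have hC : 0 ≤ q2 / (q2 - 1) := div_nonneg hq2.le (by linarith)
  have hc : 0 < v ^ (q2 / q1) := rpow_pos_of_pos hv _
  have hcross : (v ^ (q2 / q1)) ^ (-(q1 - q1 / q2)) = v ^ (1 - q2) := by
    rw [← rpow_mul hv.le]; congr 1; field_simp; ring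
  have hscale : (v ^ (q2 / q1)) ^ (1 - (q1 - q1 / q2)) = v ^ (1 + q2 / q1 - q2) := by
    rw [← rpow_mul hv.le]; congr 1; field_simp; ring
  have := setIntegral_le_of_le_mul_min_rpow measurableSet_Ioi subset_rfl hC hβ hc
    (fun t _ => integral_nonneg fun s => rho_nonneg ..) fun t ht => by
      rw [mul_min_of_nonneg _ _ hC, hcross, neg_sub]
      exact le_min (setIntegral_rho_add_le_rpow_shift hq2' hv t)
        (setIntegral_rho_add_le_rpow_left hq2' ht hv.le)
  rwa [hscale, ← mul_assoc] at this

end Rho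

theorem stmt_4 (q1 q2 : ℝ) (hq1 : 0 < q1) (hq2 : 0 < q2)
    (hQ : 1 / q1 + 1 / q2 < 1) (hE : 1 < 1 / q1 + 3 / (2 * q2)) :
    ∫⁻ v in Ioi (0 : ℝ),
      ENNReal.ofReal ((∫ t in Ioi (0 : ℝ), ∫ s in Ioc (0 : ℝ) 1,
        rho q1 q2 t (s + v)) ^ 2) < ⊤ := by
  have hq1' : 1 < q1 := (div_lt_one hq1).1 (by linarith [one_div_pos.2 hq2])
  have hsingular : -1 / 2 < 1 + q2 / q1 - q2 := by
    have h := mul_lt_mul_of_pos_left hE hq2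
    rw [mul_add, mul_one, mul_one_div, mul_div_left_comm, div_mul_cancel_right₀ hq2.ne'] at h
    linarith
  have hdecay : q2 / q1 - q2 < -1 / 2 := by
    have h := mul_lt_mul_of_pos_left hQ hq2
    rw [mul_add, mul_one, mul_one_div, mul_one_div_cancel hq2.ne'] at h
    linarith
  exact lintegral_Ioi_ofReal_sq_lt_top_of_le_rpow hsingular hdecay
    (fun v _ => integral_nonneg fun t => integral_nonneg fun s => rho_nonneg ..)
    (fun v hv => integral_integral_rho_add_le_rpow_singular hq1 hq2 hQ hv.1)
    (fun v hv => integral_integral_rho_add_le_rpow_decay hq1' hq2.le (one_pos.trans hv))
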